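/- Hyperbolic energy of the asymptotically AdS Gauss–Bonnet black hole. Let n ≥ 4, α̃ ∈ (0, 1/2), M ≥ 0, set ℓ² = 1/(1 − α̃) (so that 1 − 4α̃/ℓ² = (1 − 2α̃)²), and define V_GB(r) = 1 + (r²/(2α̃))·(1 − √((1 − 2α̃)² + 8Mα̃/r^n)) for r > 0. Then V_GB(r)/(1 + r²) → 1 as r → ∞ (the solution is asymptotically AdS with unit effective length scale), and (r^{n−2}/2)·(1 + r² − V_GB(r)) → M/(1 − 2α̃) as r → ∞; that is, the hyperbolic energy of the Gauss–Bonnet-AdS solution equals M/(1 − 2α̃). -/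

import Mathlib

open Real Filter Topology

/-!
Writing `c = 1 - 2α̃`, one has `1 + r² - V(r) = r² (√(c² + 8Mα̃/rⁿ) - c) / (2α̃)`. Rationalising
the difference of square roots turns `(r^{n-2}/2)(1 + r² - V(r))` into
`2M / (√(c² + 8Mα̃/rⁿ) + c) → M/c`. Finite energy makes `1 + r² - V(r)` negligible against
`1 + r²`, whence `V(r)/(1 + r²) → 1`.
-/

noncomputable def gaussBonnetV (ta M : ℝ) (n : ℕ) (r : ℝ) : ℝ :=
  1 + r ^ 2 / (2 * ta) * (1 - √((1 - 2 * ta) ^ 2 + 8 * M * ta / r ^ n))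

theorem tendsto_div_one_add_sq_of_tendsto_energy {V : ℝ → ℝ} {m : ℕ} {E : ℝ}
    (hE : Tendsto (fun r => r ^ m / 2 * (1 + r ^ 2 - V r)) atTop (𝓝 E)) :
    Tendsto (fun r => V r / (1 + r ^ 2)) atTop (𝓝 1) := by
  have hweight : Tendsto (fun r : ℝ => 2 / (r ^ m * (1 + r ^ 2))) atTop (𝓝 0) := by
    refine tendsto_const_nhds.div_atTop (tendsto_atTop_mono' _ ?_
      (tendsto_atTop_add_const_left _ 1 (tendsto_pow_atTop two_ne_zero)))
    filter_upwards [eventually_ge_atTop 1] with r hr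
    exact le_mul_of_one_le_left (by positivity) (one_le_pow₀ hr)
  have := tendsto_const_nhds (x := (1 : ℝ)).sub (hE.mul hweight)
  rw [mul_zero, sub_zero] at this
  refine this.congr' ?_
  filter_upwards [eventually_gt_atTop 0] with r hr
  field_simp
  ring

theorem tendsto_sqrt_sq_add_div_pow {c : ℝ} (hc : 0 ≤ c) (k : ℝ) {n : ℕ} (hn : n ≠ 0) :
    Tendsto (fun r : ℝ => √(c ^ 2 + k / r ^ n)) atTop (𝓝 c) := by
  have h := (tendsto_const_nhds (x := c ^ 2)).add
    (tendsto_const_nhds (x := k).div_atTop (tendsto_pow_atTop hn))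
  rw [add_zero] at h
  simpa only [sqrt_sq hc] using h.sqrt

theorem gaussBonnet_energy_density_eq {n : ℕ} (hn : 2 ≤ n) {ta M r s : ℝ} (hta : ta ≠ 0)
    (hr : r ≠ 0) (hs : s ^ 2 = (1 - 2 * ta) ^ 2 + 8 * M * ta / r ^ n)
    (hsc : s + (1 - 2 * ta) ≠ 0) :
    r ^ (n - 2) / 2 * (1 + r ^ 2 - (1 + r ^ 2 / (2 * ta) * (1 - s))) =
      2 * M / (s + (1 - 2 * ta)) := by
  have hpow : r ^ (n - 2) * r ^ 2 = r ^ n := by rw [← pow_add, Nat.sub_add_cancel hn]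
  rw [eq_div_iff hsc]
  field_simp at hs ⊢
  linear_combination (s ^ 2 - (1 - 2 * ta) ^ 2) * hpow + hs

theorem tendsto_gaussBonnetV_energy {n : ℕ} (hn : 2 ≤ n) {ta : ℝ} (hta0 : 0 < ta)
    (hta : ta < 1 / 2) (M : ℝ) :
    Tendsto (fun r => r ^ (n - 2) / 2 * (1 + r ^ 2 - gaussBonnetV ta M n r)) atTop
      (𝓝 (M / (1 - 2 * ta))) := by
  have hc : 0 < 1 - 2 * ta := by linarith
  have hsqrt := tendsto_sqrt_sq_add_div_pow hc.le (8 * M * ta) (n := n) (by omega)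
  have hlim : Tendsto (fun r : ℝ => 2 * M / (√((1 - 2 * ta) ^ 2 + 8 * M * ta / r ^ n) +
      (1 - 2 * ta))) atTop (𝓝 (M / (1 - 2 * ta))) := by
    have h := (tendsto_const_nhds (x := 2 * M)).div (hsqrt.add_const (1 - 2 * ta))
      (by positivity)
    rwa [← two_mul, mul_div_mul_left _ _ two_ne_zero] at h
  refine hlim.congr' ?_
  filter_upwards [eventually_gt_atTop 0, hsqrt.eventually (eventually_gt_nhds hc)]
    with r hr hsqrt_pos
  have hsq := sq_sqrt (sqrt_pos.mp hsqrt_pos).le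
  exact (gaussBonnet_energy_density_eq hn hta0.ne' hr.ne' hsq (by positivity)).symm

theorem gb_black_hole_hyperbolic_energy (n : ℕ) (hn : 4 ≤ n) (ta M : ℝ)
    (hta0 : 0 < ta) (hta : ta < 1 / 2) :
    Tendsto
      (fun r : ℝ =>
        (1 + r ^ 2 / (2 * ta) * (1 - Real.sqrt ((1 - 2 * ta) ^ 2 + 8 * M * ta / r ^ n)))
          / (1 + r ^ 2))
      atTop (nhds 1) ∧
    Tendsto
      (fun r : ℝ => r ^ (n - 2) / 2 *
        (1 + r ^ 2
          - (1 + r ^ 2 / (2 * ta) * (1 - Real.sqrt ((1 - 2 * ta) ^ 2 + 8 * M * ta / r ^ n)))))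
      atTop (nhds (M / (1 - 2 * ta))) := by
  have hE := tendsto_gaussBonnetV_energy (by omega : 2 ≤ n) hta0 hta M
  exact ⟨tendsto_div_one_add_sq_of_tendsto_energy hE, hE⟩
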